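/- If partition Y refines partition X, then μ(ΔY \ ΔX) ≥ 0; equivalently the entropy is monotone under refinement: H(X) ≤ H(Y). -/

import Mathlib

open Finset BigOperators

variable {Ω : Type*} [Fintype Ω] [DecidableEq Ω]

/-- Probability of a subset: `p(T) = Σ_{ω∈T} p(ω)`. -/
def pS (p : Ω → ℝ) (T : Finset Ω) : ℝ := ∑ ω ∈ T, p ω

/-- `p(T) log p(T)` (with `0 log 0 = 0` since `Real.log 0 = 0`). -/
noncomputable def plog (p : Ω → ℝ) (T : Finset Ω) : ℝ := pS p T * Real.log (pS p T)

/-- The interior-loss measure of an atom `S`. -/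
noncomputable def mu (p : Ω → ℝ) (S : Finset Ω) : ℝ :=
  ∑ T ∈ S.powerset.filter (· ≠ ∅), (-1 : ℝ) ^ (S.card - T.card) * plog p T

/-- `μ` of a set of atoms, extended additively. -/
noncomputable def muSet (p : Ω → ℝ) (R : Finset (Finset Ω)) : ℝ := ∑ S ∈ R, mu p S

/-- A partition `X` crosses an atom `S` when `S` meets at least two distinct parts. -/
def crossed (X : Finpartition (univ : Finset Ω)) (S : Finset Ω) : Prop :=
  ∃ P ∈ X.parts, ∃ Q ∈ X.parts, P ≠ Q ∧ (S ∩ P).Nonempty ∧ (S ∩ Q).Nonempty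

open scoped Classical in
/-- The content `ΔX`: set of atoms crossed by the partition `X`. -/
noncomputable def content (X : Finpartition (univ : Finset Ω)) : Finset (Finset Ω) :=
  (univ : Finset (Finset Ω)).filter (fun S => 2 ≤ S.card ∧ crossed X S)

/-- Shannon entropy of a partition. -/
noncomputable def Hent (p : Ω → ℝ) (X : Finpartition (univ : Finset Ω)) : ℝ :=
  - ∑ P ∈ X.parts, pS p P * Real.log (pS p P)

/-- `X` refines `Z`: every part of `X` lies in a part of `Z`. -/
def refines (X Z : Finpartition (univ : Finset Ω)) : Prop :=
  ∀ P ∈ X.parts, ∃ Q ∈ Z.parts, P ⊆ Q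

/-!
Möbius inversion over the Boolean lattice gives `∑_{T ⊆ S} μ(T) = p(S) log p(S)`, so the atoms
of size at least two inside `S` carry total mass `p(S) log p(S) - ∑_{ω ∈ S} p(ω) log p(ω)`.
An atom is left uncrossed by `X` exactly when it lies inside one part of `X`; summing over parts
gives `μ(ΔX) = H(X) + p(Ω) log p(Ω)`. Refinement gives `ΔX ⊆ ΔY`, hence
`μ(ΔY \ ΔX) = H(Y) - H(X)`, and this is nonnegative because `H(X) = -∑_ω p(ω) log p(X(ω))`
where `X(ω)`, the part of `X` containing `ω`, contains `Y(ω)`.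
-/

open scoped Classical

section Subsets

variable {α : Type*} [DecidableEq α]

theorem Finset.sum_Icc_neg_one_pow_card_sub {U S : Finset α} (hUS : U ⊆ S) :
    ∑ T ∈ Icc U S, (-1 : ℤ) ^ (#T - #U) = if U = S then 1 else 0 := by
  have hdisj : ∀ V ∈ (S \ U).powerset, Disjoint U V := fun V hV =>
    disjoint_sdiff.mono_right (mem_powerset.1 hV)
  rw [Icc_eq_image_powerset hUS, sum_image fun V hV W hW hVW => by
    rw [← union_sdiff_cancel_left (hdisj V hV), hVW, union_sdiff_cancel_left (hdisj W hW)]]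
  rw [sum_congr rfl fun V hV => by
    rw [card_union_of_disjoint (hdisj V hV), Nat.add_sub_cancel_left], sum_powerset_neg_one_pow_card]
  have hSU : S \ U = ∅ ↔ U = S :=
    sdiff_eq_empty_iff_subset.trans ⟨hUS.antisymm, fun h => h ▸ subset_rfl⟩
  simp only [hSU]

theorem Finset.sum_powerset_sum_powerset_neg_one_pow {R : Type*} [Ring R] (f : Finset α → R)
    (S : Finset α) :
    ∑ T ∈ S.powerset, ∑ U ∈ T.powerset, (-1 : R) ^ (#T - #U) * f U = f S := by
  rw [sum_comm' (t' := S.powerset) (s' := fun U => Icc U S) fun T U => by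
    simp only [mem_powerset, mem_Icc]
    exact ⟨fun ⟨hTS, hUT⟩ => ⟨⟨hUT, hTS⟩, hUT.trans hTS⟩, fun ⟨⟨hUT, hTS⟩, _⟩ => ⟨hTS, hUT⟩⟩]
  have hinner : ∀ U ∈ S.powerset,
      ∑ T ∈ Icc U S, (-1 : R) ^ (#T - #U) * f U = if U = S then f S else 0 := by
    intro U hU
    have h := congrArg (Int.cast : ℤ → R) (sum_Icc_neg_one_pow_card_sub (mem_powerset.1 hU))
    push_cast at h
    rw [← sum_mul, h]
    split_ifs with hUS <;> simp [hUS]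
  rw [sum_congr rfl hinner, sum_ite_eq' _ _ _, if_pos (mem_powerset_self S)]

def atoms (S : Finset α) : Finset (Finset α) := S.powerset.filter (2 ≤ #·)

theorem Finpartition.pairwiseDisjoint_atoms {s : Finset α} (X : Finpartition s) :
    (X.parts : Set (Finset α)).PairwiseDisjoint atoms := by
  intro P hP Q hQ hPQ
  refine disjoint_left.2 fun T hTP hTQ => ?_
  simp only [atoms, mem_filter, mem_powerset] at hTP hTQ
  obtain ⟨a, ha⟩ := card_pos.1 (by omega : 0 < #T)
  exact disjoint_left.1 (X.disjoint hP hQ hPQ) (hTP.1 ha) (hTQ.1 ha)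

theorem Finpartition.sum_parts_sum {M : Type*} [AddCommMonoid M] {s : Finset α}
    (X : Finpartition s) (f : α → M) : ∑ P ∈ X.parts, ∑ a ∈ P, f a = ∑ a ∈ s, f a := by
  have h := sum_biUnion (f := f) X.disjoint
  rw [X.biUnion_parts] at h
  exact h.symm

end Subsets

section Mobius

variable {α : Type*} (p : α → ℝ)

theorem plog_empty : plog p ∅ = 0 := by simp [plog, pS]

variable [DecidableEq α]

theorem mu_eq_sum_powerset (S : Finset α) :
    mu p S = ∑ T ∈ S.powerset, (-1 : ℝ) ^ (#S - #T) * plog p T :=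
  sum_filter_of_ne fun T _ hT hT0 => hT (by rw [hT0, plog_empty, mul_zero])

theorem sum_powerset_mu (S : Finset α) : ∑ T ∈ S.powerset, mu p T = plog p S := by
  simp_rw [mu_eq_sum_powerset]
  exact sum_powerset_sum_powerset_neg_one_pow (plog p) S

theorem mu_empty : mu p ∅ = 0 := by simp [mu_eq_sum_powerset, plog_empty]

theorem mu_singleton (ω : α) : mu p {ω} = plog p {ω} := by
  have hpow : ({ω} : Finset α).powerset = {∅, {ω}} := by
    rw [← insert_empty_eq ω, powerset_insert]
    simp
  rw [mu_eq_sum_powerset, hpow, sum_pair (singleton_ne_empty ω).symm]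
  simp [plog_empty]

theorem sum_atoms_mu (S : Finset α) :
    ∑ T ∈ atoms S, mu p T = plog p S - ∑ ω ∈ S, plog p {ω} := by
  have hsmall : S.powerset.filter (¬ 2 ≤ #·) = insert ∅ (powersetCard 1 S) := by
    ext T
    simp only [mem_filter, mem_powerset, mem_insert, mem_powersetCard]
    constructor
    · rintro ⟨hTS, hT⟩
      obtain hT0 | hT1 : #T = 0 ∨ #T = 1 := by omega
      · exact .inl (card_eq_zero.1 hT0)
      · exact .inr ⟨hTS, hT1⟩
    · rintro (rfl | ⟨hTS, hT⟩)
      · simp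
      · exact ⟨hTS, by omega⟩
  have hsplit := sum_filter_add_sum_filter_not S.powerset (2 ≤ #·) (mu p)
  rw [hsmall, sum_insert (by simp), mu_empty, zero_add, powersetCard_one, sum_map,
    sum_powerset_mu] at hsplit
  simp only [Function.Embedding.coeFn_mk, mu_singleton] at hsplit
  rw [atoms]
  linarith

end Mobius

section Partition

variable {X Y : Finpartition (univ : Finset Ω)}

theorem crossed_iff_exists_part_ne {T : Finset Ω} :
    crossed X T ↔ ∃ a ∈ T, ∃ b ∈ T, X.part a ≠ X.part b := by
  constructor
  · rintro ⟨P, hP, Q, hQ, hPQ, ⟨a, ha⟩, ⟨b, hb⟩⟩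
    rw [mem_inter] at ha hb
    exact ⟨a, ha.1, b, hb.1, by rwa [X.part_eq_of_mem hP ha.2, X.part_eq_of_mem hQ hb.2]⟩
  · rintro ⟨a, ha, b, hb, hab⟩
    exact ⟨_, X.part_mem.2 (mem_univ a), _, X.part_mem.2 (mem_univ b), hab,
      ⟨a, mem_inter.2 ⟨ha, X.mem_part (mem_univ a)⟩⟩,
      ⟨b, mem_inter.2 ⟨hb, X.mem_part (mem_univ b)⟩⟩⟩

theorem not_crossed_iff_exists_subset {T : Finset Ω} (hT : T.Nonempty) :
    ¬ crossed X T ↔ ∃ P ∈ X.parts, T ⊆ P := by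
  simp only [crossed_iff_exists_part_ne, not_exists, not_and, not_not]
  constructor
  · intro h
    obtain ⟨a, ha⟩ := hT
    exact ⟨X.part a, X.part_mem.2 (mem_univ a), fun b hb =>
      h a ha b hb ▸ X.mem_part (mem_univ b)⟩
  · rintro ⟨P, hP, hTP⟩ a ha b hb
    rw [X.part_eq_of_mem hP (hTP ha), X.part_eq_of_mem hP (hTP hb)]

theorem filter_not_crossed_atoms_univ :
    (atoms univ).filter (¬ crossed X ·) = X.parts.biUnion atoms := by
  ext T
  simp only [atoms, mem_filter, mem_powerset, subset_univ, true_and, mem_biUnion]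
  constructor
  · rintro ⟨hT, hc⟩
    obtain ⟨P, hP, hTP⟩ := (not_crossed_iff_exists_subset (card_pos.1 (by omega))).1 hc
    exact ⟨P, hP, hTP, hT⟩
  · rintro ⟨P, hP, hTP, hT⟩
    exact ⟨hT, (not_crossed_iff_exists_subset (card_pos.1 (by omega))).2 ⟨P, hP, hTP⟩⟩

theorem content_eq_filter_atoms :
    content X = (atoms univ).filter (crossed X) := by
  ext T
  simp [content, atoms]

theorem part_subset_part_of_refines (h : refines Y X) (ω : Ω) : Y.part ω ⊆ X.part ω := by
  obtain ⟨Q, hQ, hYQ⟩ := h _ (Y.part_mem.2 (mem_univ ω))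
  rwa [X.part_eq_of_mem hQ (hYQ (Y.mem_part (mem_univ ω)))]

theorem content_mono (h : refines Y X) : content X ⊆ content Y := by
  intro T
  simp only [content_eq_filter_atoms, mem_filter, crossed_iff_exists_part_ne]
  rintro ⟨hT, a, ha, b, hb, hab⟩
  refine ⟨hT, a, ha, b, hb, fun hYab => hab ?_⟩
  have hb' : b ∈ X.part a :=
    part_subset_part_of_refines h a (hYab ▸ Y.mem_part (mem_univ b))
  exact (X.part_eq_of_mem (X.part_mem.2 (mem_univ a)) hb').symm

end Partition

section Entropy

variable (p : Ω → ℝ)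

theorem sum_mu_filter_not_crossed (X : Finpartition (univ : Finset Ω)) :
    ∑ T ∈ (atoms univ).filter (¬ crossed X ·), mu p T
      = ∑ P ∈ X.parts, plog p P - ∑ ω, plog p {ω} := by
  rw [filter_not_crossed_atoms_univ, sum_biUnion X.pairwiseDisjoint_atoms]
  simp_rw [sum_atoms_mu]
  rw [sum_sub_distrib, X.sum_parts_sum]

theorem muSet_content (X : Finpartition (univ : Finset Ω)) :
    muSet p (content X) = Hent p X + plog p univ := by
  have hsplit := sum_filter_add_sum_filter_not (atoms univ) (crossed X) (mu p)
  rw [sum_mu_filter_not_crossed, sum_atoms_mu] at hsplit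
  rw [muSet, content_eq_filter_atoms, Hent]
  simp only [plog] at hsplit ⊢
  linarith

theorem Hent_eq_neg_sum_mul_log_part (X : Finpartition (univ : Finset Ω)) :
    Hent p X = -∑ ω, p ω * Real.log (pS p (X.part ω)) := by
  rw [Hent, ← X.sum_parts_sum]
  congr 1
  refine sum_congr rfl fun P hP => ?_
  rw [pS, sum_mul]
  exact sum_congr rfl fun ω hω => by rw [X.part_eq_of_mem hP hω, pS]

theorem Hent_mono {X Y : Finpartition (univ : Finset Ω)} (hp : ∀ ω, 0 ≤ p ω)
    (h : refines Y X) : Hent p X ≤ Hent p Y := by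
  rw [Hent_eq_neg_sum_mul_log_part, Hent_eq_neg_sum_mul_log_part, neg_le_neg_iff]
  refine sum_le_sum fun ω _ => ?_
  rcases (hp ω).eq_or_lt with hω | hω
  · simp [← hω]
  have hY : p ω ≤ pS p (Y.part ω) :=
    single_le_sum (fun a _ => hp a) (Y.mem_part (mem_univ ω))
  have hYX : pS p (Y.part ω) ≤ pS p (X.part ω) :=
    sum_le_sum_of_subset_of_nonneg (part_subset_part_of_refines h ω) fun a _ _ => hp a
  exact mul_le_mul_of_nonneg_left (Real.log_le_log (hω.trans_le hY) hYX) hω.le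

end Entropy

theorem muSet_sdiff_nonneg_of_refines_general {Ω : Type*} [Fintype Ω] [DecidableEq Ω] (p : Ω → ℝ)
    (hp : ∀ ω, 0 ≤ p ω)
    (X Y : Finpartition (univ : Finset Ω)) (h : refines Y X) :
    0 ≤ muSet p (content Y \ content X) ∧ Hent p X ≤ Hent p Y := by
  have hH := Hent_mono p hp h
  refine ⟨?_, hH⟩
  rw [muSet, sum_sdiff_eq_sub (content_mono h), ← muSet, ← muSet, muSet_content,
    muSet_content]
  linarith

theorem muSet_sdiff_nonneg_of_refines {Ω : Type*} [Fintype Ω] [DecidableEq Ω] (p : Ω → ℝ)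
    (hp : ∀ ω, 0 ≤ p ω) (hsum : ∑ ω, p ω = 1)
    (X Y : Finpartition (univ : Finset Ω)) (h : refines Y X) :
    0 ≤ muSet p (content Y \ content X) ∧ Hent p X ≤ Hent p Y :=
  muSet_sdiff_nonneg_of_refines_general p hp X Y h
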